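/- Let λ = (r^m) be a rectangular partition with r ≥ 2 and m ≥ 2 and n = rm. Then λ has exactly two neighbors in G_n, namely (r+1, r^{m-2}, r-1) and (r^{m-1}, r-1, 1), and these two neighbors are adjacent to each other, so λ lies in a triangle of G_n. -/

import Mathlib

/-- Elementary one-cell transfer: move one cell from a part `a` of `l` to another
part `b` (or to a new part, encoded by `b = 0`), discarding zero parts. -/
def PartitionTransfer {n : ℕ} (l m : n.Partition) : Prop :=
  ∃ a ∈ l.parts, ∃ b, (b ∈ l.parts.erase a ∨ b = 0) ∧
    m.parts = Multiset.filter (· ≠ 0) ((l.parts.erase a).erase b + {a - 1, b + 1})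

/-- The partition graph `G_n`: partitions of `n`, adjacent iff one is obtained from
the other by an elementary one-cell transfer producing a different partition. -/
def partitionGraph (n : ℕ) : SimpleGraph (Nat.Partition n) where
  Adj l m := l ≠ m ∧ (PartitionTransfer l m ∨ PartitionTransfer m l)
  symm := ⟨fun _ _ h => ⟨h.1.symm, h.2.symm⟩⟩
  loopless := ⟨fun _ h => h.1 rfl⟩

/-- The hook partition `(n-k, 1^k)`. -/
def hookPartition (n k : ℕ) (h : k + 1 ≤ n) : n.Partition :=
  ⟨Multiset.replicate k 1 + {n - k}, by
    intro i hi
    simp [Multiset.mem_replicate] at hi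
    rcases hi with ⟨-, rfl⟩ | rfl
    · norm_num
    · omega, by
    simp [Multiset.sum_replicate]
    omega⟩

/-- The partition `(1^n)`. -/
def onesPartition (n : ℕ) : n.Partition :=
  ⟨Multiset.replicate n 1, by
    intro i hi
    rw [Multiset.mem_replicate] at hi
    omega, by simp [Multiset.sum_replicate]⟩

/-- The two-part partition `(n-k, k)`. -/
def twoPartPartition (n k : ℕ) (h1 : 1 ≤ k) (h2 : 2 * k ≤ n) : n.Partition :=
  ⟨{n - k, k}, by
    intro i hi
    simp [Multiset.mem_cons] at hi
    rcases hi with rfl | rfl <;> omega, by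
    simp
    omega⟩

/-- The multiset of column lengths of the Ferrers diagram with row lengths `s`. -/
def conjParts (s : Multiset ℕ) : Multiset ℕ :=
  (Multiset.range s.sup).map fun j => (s.filter fun a => j < a).card

private theorem conjParts_aux_inner (a N : ℕ) (ha : a ≤ N) :
    (∑ j ∈ Finset.range N, if a > j then 1 else 0) = a := by
  rw [Finset.sum_boole]
  have : (Finset.range N).filter (fun j => a > j) = Finset.range a := by
    ext j; simp; omega
  rw [this]; simp

private theorem conjParts_aux (s : Multiset ℕ) (N : ℕ) (hs : ∀ a ∈ s, a ≤ N) :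
    (∑ j ∈ Finset.range N, Multiset.countP (fun a => j < a) s) = s.sum := by
  induction s using Multiset.induction with
  | empty => simp
  | cons a s ih =>
    have ha : a ≤ N := hs a (Multiset.mem_cons_self a s)
    have ih' := ih fun b hb => hs b (Multiset.mem_cons_of_mem hb)
    simp only [Multiset.countP_cons, Finset.sum_add_distrib, ih', Multiset.sum_cons]
    rw [conjParts_aux_inner a N ha]
    omega

theorem conjParts_sum (s : Multiset ℕ) : (conjParts s).sum = s.sum := by
  have h1 : (conjParts s).sum
      = ∑ j ∈ Finset.range s.sup, Multiset.countP (fun a => j < a) s := by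
    simp [conjParts, Multiset.countP_eq_card_filter]
    rfl
  rw [h1, conjParts_aux]
  intro a ha
  exact Multiset.le_sup ha

/-- The conjugate partition: transpose of the Ferrers diagram, so that the `j`-th
part of the conjugate is `#{i : l_i ≥ j}`. -/
def conjPartition {n : ℕ} (l : n.Partition) : n.Partition :=
  ⟨conjParts l.parts, by
    intro i hi
    simp only [conjParts, Multiset.mem_map, Multiset.mem_range] at hi
    obtain ⟨j, hj, rfl⟩ := hi
    rw [Multiset.card_pos]
    intro h
    have : l.parts.sup ≤ j := by
      rw [Multiset.sup_le]
      intro b hb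
      by_contra hbj
      have : b ∈ Multiset.filter (fun a => j < a) l.parts :=
        Multiset.mem_filter.2 ⟨hb, by omega⟩
      simp [h] at this
    omega, by rw [conjParts_sum, l.parts_sum]⟩

/-- The staircase partition `(t, t-1, ..., 2, 1)` of `t*(t+1)/2`. -/
def staircasePartition (t : ℕ) : (t * (t + 1) / 2).Partition :=
  ⟨(Multiset.range t).map (· + 1), by
    intro i hi
    simp [Multiset.mem_map] at hi
    omega, by
    have h : ((Multiset.range t).map (· + 1)).sum = ∑ i ∈ Finset.range (t + 1), i := by
      rw [Finset.sum_range_succ']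
      rfl
    rw [h, Finset.sum_range_id]
    simp [Nat.mul_comm]⟩


/-!
Write a transfer as choosing parts `a ::ₘ b ::ₘ t` (or `a ::ₘ t` when the cell starts a new
part) and replacing `a, b` by `a - 1, b + 1`. In `(r^m)` every part equals `r`, so moving a
cell out of the rectangle can only produce `(r+1, r^{m-2}, r-1)` or `(r^{m-1}, r-1, 1)`.
Conversely, if a transfer produces `(r^m)`, then `b + 1 = r` and `a - 1 ∈ {0, r}`, which
again gives one of these two partitions; and removing the part `1` of the second one and
adding it to a part `r` gives the first.
-/

open Multiset

theorem Multiset.eq_and_eq_replicate_of_cons_eq_replicate {α : Type*} {a r : α}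
    {t : Multiset α} {k : ℕ} (h : a ::ₘ t = replicate k r) :
    a = r ∧ t = replicate (k - 1) r := by
  obtain ⟨hcard, hmem⟩ := eq_replicate.1 h
  refine ⟨hmem a (mem_cons_self a t),
    eq_replicate.2 ⟨?_, fun b hb => hmem b (mem_cons_of_mem hb)⟩⟩
  rw [← hcard, card_cons, Nat.add_sub_cancel]

theorem Multiset.filter_ne_zero_add_pair {t : Multiset ℕ} (ht : 0 ∉ t) (a b : ℕ) :
    (t + {a, b + 1}).filter (· ≠ 0) =
      if a = 0 then (b + 1) ::ₘ t else a ::ₘ (b + 1) ::ₘ t := by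
  have ht' : t.filter (· ≠ 0) = t := filter_eq_self.2 fun c hc hc0 => ht (hc0 ▸ hc)
  rw [add_comm, insert_eq_cons, cons_add, singleton_add, filter_cons,
    filter_cons_of_pos (p := (· ≠ 0)) _ b.succ_ne_zero, ht']
  by_cases ha : a = 0 <;> simp [ha, cons_swap]

section Transfer

variable {n : ℕ} {l l' : n.Partition}

theorem Nat.Partition.zero_notMem_parts (l : n.Partition) : 0 ∉ l.parts :=
  fun h => (l.parts_pos h).ne' rfl

theorem partitionTransfer_iff_exists_cons : PartitionTransfer l l' ↔ ∃ a b t,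
    (l.parts = a ::ₘ b ::ₘ t ∨ b = 0 ∧ l.parts = a ::ₘ t) ∧
      l'.parts = (t + {a - 1, b + 1}).filter (· ≠ 0) := by
  have h0 := l.zero_notMem_parts
  constructor
  · rintro ⟨a, ha, b, hb | rfl, hl'⟩
    · exact ⟨a, b, _, Or.inl (by rw [cons_erase hb, cons_erase ha]), hl'⟩
    · refine ⟨a, 0, _, Or.inr ⟨rfl, (cons_erase ha).symm⟩, ?_⟩
      rwa [erase_of_notMem fun h => h0 (mem_of_mem_erase h)] at hl'
  · rintro ⟨a, b, t, hl | ⟨rfl, hl⟩, hl'⟩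
    · exact ⟨a, by simp [hl], b, Or.inl (by simp [hl]), by simpa [hl] using hl'⟩
    · refine ⟨a, by simp [hl], 0, Or.inr rfl, ?_⟩
      rwa [hl, erase_cons_head, erase_of_notMem fun h => h0 (hl ▸ mem_cons_of_mem h)]

end Transfer

section Rectangle

variable {n r k : ℕ} {l x y : n.Partition}

theorem partitionTransfer_iff_of_parts_eq_replicate (hr : 2 ≤ r) (hk : 2 ≤ k)
    (hl : l.parts = replicate k r) :
    PartitionTransfer l x ↔ x.parts = (r - 1) ::ₘ (r + 1) ::ₘ replicate (k - 2) r ∨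
      x.parts = (r - 1) ::ₘ 1 ::ₘ replicate (k - 1) r := by
  have h0 (j : ℕ) : 0 ∉ replicate j r := fun h => by have := eq_of_mem_replicate h; omega
  have hr1 : r - 1 ≠ 0 := by omega
  rw [partitionTransfer_iff_exists_cons]
  constructor
  · rintro ⟨a, b, t, hlt | ⟨rfl, hlt⟩, hx⟩
    · obtain ⟨rfl, hbt⟩ := eq_and_eq_replicate_of_cons_eq_replicate (hl ▸ hlt).symm
      obtain ⟨rfl, rfl⟩ := eq_and_eq_replicate_of_cons_eq_replicate hbt
      left
      rw [hx, filter_ne_zero_add_pair (h0 _), if_neg hr1, Nat.sub_sub]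
    · obtain ⟨rfl, rfl⟩ := eq_and_eq_replicate_of_cons_eq_replicate (hl ▸ hlt).symm
      right
      rw [hx, filter_ne_zero_add_pair (h0 _), if_neg hr1]
  · rintro (hx | hx)
    · refine ⟨r, r, replicate (k - 2) r, Or.inl ?_, ?_⟩
      · rw [hl, ← replicate_succ, ← replicate_succ]
        congr 1
        omega
      · rw [hx, filter_ne_zero_add_pair (h0 _), if_neg hr1]
    · refine ⟨r, 0, replicate (k - 1) r, Or.inr ⟨rfl, ?_⟩, ?_⟩
      · rw [hl, ← replicate_succ]
        congr 1
        omega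
      · rw [hx, filter_ne_zero_add_pair (h0 _), if_neg hr1]

theorem parts_eq_of_partitionTransfer_eq_replicate (hr : 2 ≤ r)
    (hl : l.parts = replicate k r) (h : PartitionTransfer x l) :
    x.parts = (r - 1) ::ₘ (r + 1) ::ₘ replicate (k - 2) r ∨
      x.parts = (r - 1) ::ₘ 1 ::ₘ replicate (k - 1) r := by
  obtain ⟨a, b, t, hxt | ⟨rfl, hxt⟩, hlt⟩ := partitionTransfer_iff_exists_cons.1 h
  · have ht : 0 ∉ t := fun h0 => x.zero_notMem_parts (by simp [hxt, h0])
    have ha : a ≠ 0 := fun h0 => x.zero_notMem_parts (by simp [hxt, h0])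
    rw [hl, filter_ne_zero_add_pair ht] at hlt
    split_ifs at hlt
    · obtain ⟨hb, rfl⟩ := eq_and_eq_replicate_of_cons_eq_replicate hlt.symm
      obtain rfl : a = 1 := by omega
      obtain rfl : b = r - 1 := by omega
      right
      rw [hxt, cons_swap]
    · obtain ⟨ha, hbt⟩ := eq_and_eq_replicate_of_cons_eq_replicate hlt.symm
      obtain ⟨hb, rfl⟩ := eq_and_eq_replicate_of_cons_eq_replicate hbt
      obtain rfl : a = r + 1 := by omega
      obtain rfl : b = r - 1 := by omega
      left
      rw [hxt, cons_swap, Nat.sub_sub]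
  · have ht : 0 ∉ t := fun h0 => x.zero_notMem_parts (by simp [hxt, h0])
    have h1 : 0 + 1 ∈ l.parts := by
      rw [hlt, filter_ne_zero_add_pair ht]
      split_ifs <;> simp
    have := eq_of_mem_replicate (hl ▸ h1)
    omega

theorem partitionTransfer_of_parts_eq_cons_one (hr : 2 ≤ r) (hk : 2 ≤ k)
    (hx : x.parts = (r - 1) ::ₘ (r + 1) ::ₘ replicate (k - 2) r)
    (hy : y.parts = (r - 1) ::ₘ 1 ::ₘ replicate (k - 1) r) :
    PartitionTransfer y x := by
  have h0 : 0 ∉ (r - 1) ::ₘ replicate (k - 2) r := by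
    simp only [mem_cons, mem_replicate, not_or]
    omega
  refine partitionTransfer_iff_exists_cons.2
    ⟨1, r, (r - 1) ::ₘ replicate (k - 2) r, Or.inl ?_, ?_⟩
  · rw [hy, show k - 1 = k - 2 + 1 by omega, replicate_succ, cons_swap (r - 1) 1,
      cons_swap (r - 1) r]
  · rw [hx, filter_ne_zero_add_pair h0, if_pos rfl, cons_swap]

end Rectangle

/-- A rectangular partition `(r^m)` with `r, m ≥ 2` has exactly two
neighbors in `G_{rm}`, namely `(r+1, r^{m-2}, r-1)` and `(r^{m-1}, r-1, 1)`, and these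
two neighbors are adjacent to each other, so `(r^m)` lies in a triangle of `G_{rm}`. -/
theorem rectangle_neighbors (r m : ℕ) (hr : 2 ≤ r) (hm : 2 ≤ m)
    (lam mu1 mu2 : (r * m).Partition)
    (hl : lam.parts = Multiset.replicate m r)
    (h1 : mu1.parts = {r + 1} + Multiset.replicate (m - 2) r + {r - 1})
    (h2 : mu2.parts = Multiset.replicate (m - 1) r + {r - 1, 1}) :
    (partitionGraph (r * m)).neighborSet lam = {mu1, mu2} ∧
    (partitionGraph (r * m)).Adj mu1 mu2 := by
  have h1' : mu1.parts = (r - 1) ::ₘ (r + 1) ::ₘ replicate (m - 2) r := by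
    rw [h1, add_comm, singleton_add, singleton_add]
  have h2' : mu2.parts = (r - 1) ::ₘ 1 ::ₘ replicate (m - 1) r := by
    rw [h2, add_comm, insert_eq_cons, cons_add, singleton_add]
  have hout (x : (r * m).Partition) :=
    partitionTransfer_iff_of_parts_eq_replicate (x := x) hr hm hl
  have hmu12 : mu1 ≠ mu2 := fun h => by
    have : r + 1 ∈ mu2.parts := h ▸ by simp [h1']
    simp only [h2', mem_cons, mem_replicate] at this
    omega
  refine ⟨Set.ext fun x => ?_, hmu12,
    Or.inr (partitionTransfer_of_parts_eq_cons_one hr hm h1' h2')⟩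
  simp only [SimpleGraph.mem_neighborSet, Set.mem_insert_iff, Set.mem_singleton_iff,
    Nat.Partition.ext_iff, h1', h2']
  refine ⟨fun ⟨_, hx⟩ =>
      hx.elim (hout x).1 (parts_eq_of_partitionTransfer_eq_replicate hr hl),
    fun hx => ⟨?_, Or.inl ((hout x).2 hx)⟩⟩
  rintro rfl
  have : r - 1 ∈ lam.parts := by rcases hx with h | h <;> simp [h]
  have := eq_of_mem_replicate (hl ▸ this)
  omega
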